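/- Let n = 2, u₀ ∈ L²(ℝ²), u₁ ∈ L^{1,γ}(ℝ²) with γ ∈ (0,1], and P = ∫_{ℝ²} u₁ dx ≠ 0. Then the solution of the generalized Rosenau equation satisfies ‖u(t,·)‖²_{L²(ℝ²)} ≥ C P² log t for t sufficiently large, with some C > 0. -/

import Mathlib

/-!
For small `|ξ|` the data satisfy `û₁(ξ) ≈ P` (continuity of the Fourier transform of an `L¹`
function) and `|û₀(ξ)| ≤ ∫ |u₀|` (true for every `u₀`: off `L¹` both Bochner integrals are `0`),
while the dispersion relation `f` is continuous, vanishes at `0`, is Lipschitz and is bounded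
below by a multiple of `r` near `0`. Hence wherever the phase `t f(|ξ|)` lies in a window
`[kπ + π/4, kπ + 3π/4]`, so that `|sin(t f(|ξ|))| ≥ 1/2`, the solution satisfies
`|ŵ(t, ξ)| ≥ |P| / (8 f(|ξ|))`. For every `k ≲ t` the phase crosses the `k`-th window on an
annulus of radius `≳ k/t` and width `≳ 1/t`, where `|ŵ|² ≳ P² t² / k²`; its contribution to
`‖ŵ(t)‖²` is therefore `≳ P²/k`, and the harmonic sum up to `k ≈ t` gives `P² log t`.
-/

open MeasureTheory RealInnerProductSpace Real Set

lemma half_le_abs_sin {k : ℕ} {x : ℝ} (h₁ : k * π + π / 4 ≤ x) (h₂ : x ≤ k * π + 3 * π / 4) :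
    1 / 2 ≤ |sin x| := by
  have hcos : cos (2 * x) ≤ 0 := by
    rw [← cos_sub_nat_mul_two_pi (2 * x) k]
    apply cos_nonpos_of_pi_div_two_le_of_le <;> linarith
  have hsq : 1 / 4 ≤ sin x ^ 2 := by nlinarith [cos_sq_add_sin_sq x, cos_two_mul x]
  nlinarith [abs_nonneg (sin x), sq_abs (sin x)]

lemma disjoint_Icc_phase_windows {j k : ℕ} (h : j ≠ k) :
    Disjoint (Icc (j * π + π / 4) (j * π + 3 * π / 4))
      (Icc (k * π + π / 4) (k * π + 3 * π / 4)) := by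
  wlog hjk : j < k generalizing j k
  · exact (this h.symm (by omega)).symm
  have : ((j : ℝ) + 1) * π ≤ k * π := by gcongr; exact_mod_cast hjk
  exact disjoint_left.mpr fun x hj hk => by linarith [hj.2, hk.1, pi_pos]

lemma log_add_one_le_sum_range (n : ℕ) : log (n + 1) ≤ ∑ k ∈ Finset.range n, 1 / ((k : ℝ) + 1) := by
  simpa [harmonic] using log_add_one_le_harmonic n

lemma log_le_two_mul_log_floor_add_one {a t : ℝ} (ha : 0 < a) (ht : a⁻¹ ^ 2 ≤ t) :
    log t ≤ 2 * log (⌊a * t⌋₊ + 1) := by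
  have ht0 : 0 < t := lt_of_lt_of_le (by positivity) ht
  have h1 : log (a * t) ≤ log (⌊a * t⌋₊ + 1) :=
    log_le_log (by positivity) (Nat.lt_floor_add_one _).le
  have h2 : log (a⁻¹ ^ 2) ≤ log t := log_le_log (by positivity) ht
  rw [log_mul ha.ne' ht0.ne'] at h1
  rw [log_pow, log_inv] at h2
  push_cast at h2
  linarith

lemma sqrt_sub_sqrt_le_div {x y B c : ℝ} (hx : 0 ≤ x) (hc : 0 < c) (hcy : c ≤ √y)
    (hB : 0 ≤ B) (h : y - x ≤ B) : √y - √x ≤ B / c := by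
  rw [le_div_iff₀ hc]
  have hy : 0 ≤ y := (sqrt_pos.mp (hc.trans_le hcy)).le
  rcases le_or_gt (√y) (√x) with hle | hlt
  · nlinarith [sqrt_nonneg x]
  · nlinarith [sq_sqrt hx, sq_sqrt hy, sqrt_nonneg x]

lemma sq_div_le_norm_cos_mul_add_sin_div_mul_sq {A B : ℂ} {s φ p M : ℝ} (hφ : 0 < φ)
    (hs : 1 / 2 ≤ |sin s|) (hA : ‖A‖ ≤ M) (hB : p / 2 ≤ ‖B‖) (hM : 8 * φ * M ≤ p) :
    p ^ 2 / 64 / φ ^ 2 ≤ ‖(cos s : ℂ) * A + ((sin s / φ : ℝ) : ℂ) * B‖ ^ 2 := by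
  have hp : 0 ≤ p := le_trans (by have := (norm_nonneg A).trans hA; positivity) hM
  have hcos : ‖(cos s : ℂ) * A‖ ≤ M := by
    rw [norm_mul, Complex.norm_real, norm_eq_abs]
    exact (mul_le_of_le_one_left (norm_nonneg A) (abs_cos_le_one s)).trans hA
  have hsin : p / (4 * φ) ≤ ‖((sin s / φ : ℝ) : ℂ) * B‖ := by
    rw [norm_mul, Complex.norm_real, norm_eq_abs, abs_div, abs_of_pos hφ]
    calc p / (4 * φ) = 1 / 2 / φ * (p / 2) := by ring
      _ ≤ |sin s| / φ * ‖B‖ := by gcongr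
  have hMp : M ≤ p / (8 * φ) := by rw [le_div_iff₀ (by positivity)]; linarith
  have htri := norm_sub_le ((cos s : ℂ) * A + ((sin s / φ : ℝ) : ℂ) * B) ((cos s : ℂ) * A)
  rw [add_sub_cancel_left] at htri
  have hlow : p / (8 * φ) ≤ ‖(cos s : ℂ) * A + ((sin s / φ : ℝ) : ℂ) * B‖ := by
    linarith [show p / (4 * φ) = 2 * (p / (8 * φ)) by ring]
  calc p ^ 2 / 64 / φ ^ 2 = (p / (8 * φ)) ^ 2 := by field_simp; ring
    _ ≤ _ := pow_le_pow_left₀ (by positivity) hlow 2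

section Hitting

variable {f : ℝ → ℝ} {a b y : ℝ}

lemma exists_first_hit (hab : a ≤ b) (hf : ContinuousOn f (Icc a b)) (ha : f a ≤ y)
    (hb : y ≤ f b) : ∃ c ∈ Icc a b, f c = y ∧ ∀ x ∈ Ico a c, f x < y := by
  set S := Icc a b ∩ f ⁻¹' Ici y
  have hS : IsClosed S := hf.preimage_isClosed_of_isClosed isClosed_Icc isClosed_Ici
  have hSb : b ∈ S := ⟨right_mem_Icc.mpr hab, hb⟩
  have hbdd : BddBelow S := bddBelow_Icc.mono inter_subset_left
  obtain ⟨hcab, hc⟩ : sInf S ∈ S := hS.csInf_mem ⟨b, hSb⟩ hbdd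
  have below : ∀ x ∈ Ico a (sInf S), f x < y := fun x hx =>
    not_le.mp fun hy => (csInf_le hbdd ⟨⟨hx.1, hx.2.le.trans hcab.2⟩, hy⟩).not_gt hx.2
  refine ⟨sInf S, hcab, ?_, below⟩
  obtain ⟨x, hx, hfx⟩ := intermediate_value_Icc hcab.1 (hf.mono (Icc_subset_Icc_right hcab.2))
    ⟨ha, hc⟩
  rcases hx.2.eq_or_lt with rfl | hlt
  · exact hfx
  · exact absurd hfx (below x ⟨hx.1, hlt⟩).ne

lemma exists_last_hit (hab : a ≤ b) (hf : ContinuousOn f (Icc a b)) (ha : f a ≤ y)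
    (hb : y ≤ f b) : ∃ c ∈ Icc a b, f c = y ∧ ∀ x ∈ Ioc c b, y < f x := by
  have hg : ContinuousOn (fun x => -f (-x)) (Icc (-b) (-a)) :=
    (hf.comp continuousOn_neg fun x hx => ⟨by linarith [hx.2], by linarith [hx.1]⟩).neg
  obtain ⟨c, hc, hfc, below⟩ := exists_first_hit (f := fun x => -f (-x)) (y := -y)
    (neg_le_neg hab) hg (by simpa using hb) (by simpa using ha)
  refine ⟨-c, ⟨by linarith [hc.2], by linarith [hc.1]⟩, by simpa using hfc, fun x hx => ?_⟩
  simpa using below (-x) ⟨by linarith [hx.2], by linarith [hx.1]⟩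

lemma exists_mapsTo_Icc_of_continuousOn {α β : ℝ} (hab : a ≤ b) (hf : ContinuousOn f (Icc a b))
    (ha : f a ≤ α) (hαβ : α ≤ β) (hb : β ≤ f b) :
    ∃ r R, a ≤ r ∧ r ≤ R ∧ R ≤ b ∧ f r = α ∧ f R = β ∧ MapsTo f (Icc r R) (Icc α β) := by
  obtain ⟨R, hR, hfR, belowR⟩ := exists_first_hit hab hf (ha.trans hαβ) hb
  obtain ⟨r, hr, hfr, abover⟩ :=
    exists_last_hit hR.1 (hf.mono (Icc_subset_Icc_right hR.2)) ha (hfR ▸ hαβ)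
  refine ⟨r, R, hr.1, hr.2, hR.2, hfr, hfR, fun x hx => ⟨?_, ?_⟩⟩
  · rcases hx.1.eq_or_lt with rfl | hlt
    · exact hfr.ge
    · exact (abover x ⟨hlt, hx.2⟩).le
  · rcases hx.2.eq_or_lt with rfl | hlt
    · exact hfR.le
    · exact (belowR x ⟨hr.1.trans hx.1, hlt⟩).le

end Hitting

section Fourier

variable {E : Type*} [NormedAddCommGroup E] [InnerProductSpace ℝ E] [MeasurableSpace E]
  {μ : Measure E}

noncomputable def angularFourier (μ : Measure E) (u : E → ℝ) (ξ : E) : ℂ :=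
  ∫ x, Complex.exp (-(Complex.I * (⟪x, ξ⟫ : ℝ))) * (u x : ℂ) ∂μ

lemma norm_exp_neg_I_mul (s : ℝ) : ‖Complex.exp (-(Complex.I * s))‖ = 1 := by
  simpa using Complex.norm_exp_I_mul_ofReal (-s)

lemma norm_angularFourier_le (u : E → ℝ) (ξ : E) : ‖angularFourier μ u ξ‖ ≤ ∫ x, |u x| ∂μ :=
  (norm_integral_le_integral_norm _).trans_eq <| by
    simp [norm_exp_neg_I_mul]

lemma angularFourier_zero (u : E → ℝ) : angularFourier μ u 0 = ∫ x, u x ∂μ := by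
  simp [angularFourier, integral_complex_ofReal]

lemma continuous_angularFourier [OpensMeasurableSpace E] {u : E → ℝ} (hu : Integrable u μ) :
    Continuous (angularFourier μ u) := by
  refine continuous_of_dominated (bound := fun x => |u x|) (fun ξ => ?_) (fun ξ => ?_) hu.abs
    (ae_of_all _ fun x => by fun_prop)
  · exact (Continuous.aestronglyMeasurable (by fun_prop)).mul hu.ofReal.aestronglyMeasurable
  · exact ae_of_all _ fun x => by simp [norm_exp_neg_I_mul]

lemma exists_half_le_norm_angularFourier [OpensMeasurableSpace E] {u : E → ℝ}
    (hu : Integrable u μ) (h : ∫ x, u x ∂μ ≠ 0) :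
    ∃ ε > 0, ∀ ξ : E, ‖ξ‖ ≤ ε → |∫ x, u x ∂μ| / 2 ≤ ‖angularFourier μ u ξ‖ := by
  have hlim : Filter.Tendsto (fun ξ => ‖angularFourier μ u ξ‖) (nhds 0) (nhds |∫ x, u x ∂μ|) := by
    simpa [angularFourier_zero] using ((continuous_angularFourier hu).tendsto 0).norm
  obtain ⟨ε, hε, hball⟩ := Metric.nhds_basis_closedBall.eventually_iff.mp
    (hlim.eventually_const_lt (half_lt_self (abs_pos.mpr h)))
  exact ⟨ε, hε, fun ξ hξ => (hball (by simpa using hξ)).le⟩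

end Fourier

section Dispersion

variable {δ θ μ κ : ℝ}

noncomputable def dispersion (δ θ μ κ r : ℝ) : ℝ :=
  √((μ * r ^ 4 + κ * r ^ 2) / (1 + δ * r ^ (2 * θ)))

lemma dispersion_zero : dispersion δ θ μ κ 0 = 0 := by simp [dispersion]

lemma one_le_one_add_mul_rpow (hδ : 0 ≤ δ) {r : ℝ} (hr : 0 ≤ r) : 1 ≤ 1 + δ * r ^ (2 * θ) := by
  have := rpow_nonneg hr (2 * θ)
  nlinarith

lemma continuousOn_dispersion (hδ : 0 ≤ δ) (hθ : 0 ≤ θ) :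
    ContinuousOn (dispersion δ θ μ κ) (Ici 0) := by
  refine continuous_sqrt.comp_continuousOn (ContinuousOn.div (by fun_prop) ?_ fun r hr => ?_)
  · exact (continuous_const.add (continuous_const.mul
      (continuous_rpow_const (by positivity)))).continuousOn
  · exact (zero_lt_one.trans_le (one_le_one_add_mul_rpow hδ hr)).ne'

lemma mul_le_dispersion (hδ : 0 ≤ δ) (hθ : 0 ≤ θ) (hμ : 0 ≤ μ) (hκ : 0 ≤ κ) {r : ℝ}
    (hr : 0 ≤ r) (hr1 : r ≤ 1) : √(κ / (1 + δ)) * r ≤ dispersion δ θ μ κ r := by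
  have hrθ : r ^ (2 * θ) ≤ 1 := rpow_le_one hr hr1 (by positivity)
  have hD := one_le_one_add_mul_rpow (θ := θ) hδ hr
  calc √(κ / (1 + δ)) * r = √(κ / (1 + δ) * r ^ 2) := by
        rw [sqrt_mul (by positivity), sqrt_sq hr]
    _ ≤ _ := sqrt_le_sqrt ?_
  rw [div_mul_eq_mul_div, div_le_div_iff₀ (by positivity) (by positivity)]
  have h1 : κ * r ^ 2 * (δ * r ^ (2 * θ)) ≤ κ * r ^ 2 * δ :=
    mul_le_mul_of_nonneg_left (mul_le_of_le_one_right hδ hrθ) (by positivity)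
  have h2 : 0 ≤ μ * r ^ 4 * (1 + δ) := by positivity
  nlinarith

lemma dispersion_radicand_sub_le (hδ : 0 ≤ δ) (hθ : 0 ≤ θ) (hμ : 0 ≤ μ) (hκ : 0 ≤ κ) {r r' : ℝ}
    (hr : 0 ≤ r) (hrr' : r ≤ r') (hr' : r' ≤ 1) :
    (μ * r' ^ 4 + κ * r' ^ 2) / (1 + δ * r' ^ (2 * θ))
      - (μ * r ^ 4 + κ * r ^ 2) / (1 + δ * r ^ (2 * θ)) ≤ (4 * μ + 2 * κ) * r' * (r' - r) := by
  have hD := one_le_one_add_mul_rpow (θ := θ) hδ hr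
  have hDD : 1 + δ * r ^ (2 * θ) ≤ 1 + δ * r' ^ (2 * θ) := by gcongr
  have hN : μ * r ^ 4 + κ * r ^ 2 ≤ μ * r' ^ 4 + κ * r' ^ 2 := by gcongr
  calc _ ≤ (μ * r' ^ 4 + κ * r' ^ 2) / (1 + δ * r ^ (2 * θ))
        - (μ * r ^ 4 + κ * r ^ 2) / (1 + δ * r ^ (2 * θ)) := by
        gcongr
    _ = ((μ * r' ^ 4 + κ * r' ^ 2) - (μ * r ^ 4 + κ * r ^ 2)) / (1 + δ * r ^ (2 * θ)) := by ring
    _ ≤ (μ * r' ^ 4 + κ * r' ^ 2) - (μ * r ^ 4 + κ * r ^ 2) := div_le_self (by linarith) hD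
    _ = μ * ((r' ^ 2 + r ^ 2) * (r' + r)) * (r' - r) + κ * (r' + r) * (r' - r) := by ring
    _ ≤ _ := by
      have h1 : (r' ^ 2 + r ^ 2) * (r' + r) ≤ 4 * r' := by nlinarith
      have h2 : r' + r ≤ 2 * r' := by linarith
      nlinarith [mul_le_mul_of_nonneg_left h1 hμ, mul_le_mul_of_nonneg_left h2 hκ,
        mul_nonneg hμ (sub_nonneg.mpr hrr'), mul_nonneg hκ (sub_nonneg.mpr hrr')]

lemma dispersion_sub_le {r r' : ℝ} (hδ : 0 ≤ δ) (hθ : 0 ≤ θ) (hμ : 0 ≤ μ) (hκ : 0 < κ)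
    (hr : 0 ≤ r) (hrr' : r ≤ r') (hr' : r' ≤ 1) :
    dispersion δ θ μ κ r' - dispersion δ θ μ κ r ≤ (4 * μ + 2 * κ) / √(κ / (1 + δ)) * (r' - r) := by
  rcases (hr.trans hrr').eq_or_lt with h0 | hpos
  · obtain rfl : r = 0 := le_antisymm (h0 ▸ hrr') hr
    simp [← h0]
  have ha : 0 < √(κ / (1 + δ)) := sqrt_pos.mpr (by positivity)
  calc _ ≤ (4 * μ + 2 * κ) * r' * (r' - r) / (√(κ / (1 + δ)) * r') :=
        sqrt_sub_sqrt_le_div (div_nonneg (by positivity) (by positivity)) (by positivity)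
          (mul_le_dispersion hδ hθ hμ hκ.le hpos.le hr')
          (mul_nonneg (by positivity) (sub_nonneg.mpr hrr'))
          (dispersion_radicand_sub_le hδ hθ hμ hκ.le hr hrr' hr')
    _ = _ := by field_simp

end Dispersion

def annulus (r R : ℝ) : Set (EuclideanSpace ℝ (Fin 2)) := (‖·‖) ⁻¹' Icc r R

lemma measurableSet_annulus (r R : ℝ) : MeasurableSet (annulus r R) :=
  measurable_norm measurableSet_Icc

lemma volume_annulus {r R : ℝ} (hr : 0 ≤ r) (hrR : r ≤ R) :
    volume (annulus r R) = ENNReal.ofReal (π * (R ^ 2 - r ^ 2)) := by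
  have h : annulus r R = Metric.closedBall 0 R \ Metric.ball 0 r := by
    ext ξ; simp [annulus, and_comm]
  have hsub : Metric.ball (0 : EuclideanSpace ℝ (Fin 2)) r ⊆ Metric.closedBall 0 R :=
    Metric.ball_subset_closedBall.trans (Metric.closedBall_subset_closedBall hrR)
  rw [h, measure_sdiff hsub measurableSet_ball.nullMeasurableSet measure_ball_lt_top.ne,
    EuclideanSpace.volume_closedBall_fin_two, EuclideanSpace.volume_ball_fin_two,
    ← ENNReal.ofReal_pow (hr.trans hrR), ← ENNReal.ofReal_pow hr,
    ← ENNReal.ofReal_mul (by positivity), ← ENNReal.ofReal_mul (by positivity),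
    ← ENNReal.ofReal_sub _ (by positivity)]
  ring_nf

section Counting

variable {f : ℝ → ℝ} {ε Λ c t : ℝ} {g : EuclideanSpace ℝ (Fin 2) → ENNReal}

lemma ofReal_le_setLIntegral_annulus (hf0 : f 0 = 0)
    (hlip : ∀ r r', 0 ≤ r → r ≤ r' → r' ≤ ε → f r' - f r ≤ Λ * (r' - r))
    (hg : ∀ ξ, ‖ξ‖ ≤ ε → 0 < f ‖ξ‖ → 1 / 2 ≤ |sin (t * f ‖ξ‖)| →
      ENNReal.ofReal (c / f ‖ξ‖ ^ 2) ≤ g ξ)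
    (hc : 0 ≤ c) (ht : 0 < t) {k : ℕ} {r R : ℝ} (hr : 0 ≤ r) (hrR : r ≤ R) (hR : R ≤ ε)
    (hfr : t * f r = k * π + π / 4) (hfR : t * f R = k * π + 3 * π / 4)
    (hmaps : MapsTo (fun s => t * f s) (Icc r R) (Icc (k * π + π / 4) (k * π + 3 * π / 4))) :
    ENNReal.ofReal (c * π / (2 * Λ ^ 2 * (k + 1))) ≤ ∫⁻ ξ in annulus r R, g ξ := by
  set β := k * π + 3 * π / 4 with hβdef
  have hβ : 0 < β := by positivity
  have hRβ : β ≤ t * Λ * R := by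
    have := mul_le_mul_of_nonneg_left (hlip 0 R le_rfl (hr.trans hrR) hR) ht.le
    rwa [hf0, sub_zero, sub_zero, hfR, ← mul_assoc] at this
  have hwidth : π / 2 ≤ t * Λ * (R - r) := by
    have := mul_le_mul_of_nonneg_left (hlip r R hr hrR hR) ht.le
    rw [mul_sub, hfr, hfR, ← mul_assoc] at this
    linarith
  have hΛ : 0 < Λ := by
    by_contra! h
    nlinarith [mul_nonneg ht.le (mul_nonneg (neg_nonneg.mpr h) (hr.trans hrR))]
  have harea : β * (π / 2) ≤ (t * Λ) ^ 2 * (R ^ 2 - r ^ 2) := by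
    have := mul_le_mul hRβ hwidth (by positivity) (by nlinarith)
    nlinarith [mul_nonneg (mul_nonneg hr (sub_nonneg.mpr hrR)) (sq_nonneg (t * Λ))]
  have hbound : ∀ ξ ∈ annulus r R, ENNReal.ofReal (c * t ^ 2 / β ^ 2) ≤ g ξ := by
    intro ξ hξ
    obtain ⟨hα, hβξ⟩ := hmaps hξ
    have hpos : 0 < f ‖ξ‖ := pos_of_mul_pos_right (lt_of_lt_of_le (by positivity) hα) ht.le
    refine le_trans (ENNReal.ofReal_le_ofReal ?_)
      (hg ξ (hξ.2.trans hR) hpos (half_le_abs_sin hα hβξ))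
    calc c * t ^ 2 / β ^ 2 = c / (β / t) ^ 2 := by field_simp
      _ ≤ c / f ‖ξ‖ ^ 2 := by
        gcongr
        rw [le_div_iff₀ ht]; linarith
  calc ENNReal.ofReal (c * π / (2 * Λ ^ 2 * (k + 1)))
      ≤ ENNReal.ofReal (c * t ^ 2 / β ^ 2) * ENNReal.ofReal (π * (R ^ 2 - r ^ 2)) := by
        rw [← ENNReal.ofReal_mul (by positivity)]
        refine ENNReal.ofReal_le_ofReal ?_
        calc c * π / (2 * Λ ^ 2 * (k + 1)) = c * π ^ 2 / (2 * Λ ^ 2 * (π * (k + 1))) := by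
              field_simp
          _ ≤ c * π ^ 2 / (2 * Λ ^ 2 * β) := by gcongr; linarith [pi_pos, hβdef]
          _ = c * t ^ 2 / β ^ 2 * (π * ((β * (π / 2)) / (t * Λ) ^ 2)) := by field_simp
          _ ≤ c * t ^ 2 / β ^ 2 * (π * (R ^ 2 - r ^ 2)) := by
            gcongr
            rw [div_le_iff₀ (by positivity)]; linarith
    _ = ∫⁻ _ in annulus r R, ENNReal.ofReal (c * t ^ 2 / β ^ 2) := by
        rw [setLIntegral_const, volume_annulus hr hrR]
    _ ≤ ∫⁻ ξ in annulus r R, g ξ := setLIntegral_mono' (measurableSet_annulus r R) hbound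

lemma ofReal_mul_sum_le_lintegral (hε : 0 ≤ ε) (hcont : ContinuousOn f (Icc 0 ε)) (hf0 : f 0 = 0)
    (hlip : ∀ r r', 0 ≤ r → r ≤ r' → r' ≤ ε → f r' - f r ≤ Λ * (r' - r))
    (hg : ∀ ξ, ‖ξ‖ ≤ ε → 0 < f ‖ξ‖ → 1 / 2 ≤ |sin (t * f ‖ξ‖)| →
      ENNReal.ofReal (c / f ‖ξ‖ ^ 2) ≤ g ξ)
    (hc : 0 ≤ c) (ht : 0 < t) {K : ℕ} (hK : K * π ≤ t * f ε) :
    ENNReal.ofReal (c * π / (2 * Λ ^ 2) * ∑ k ∈ Finset.range K, 1 / ((k : ℝ) + 1))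
      ≤ ∫⁻ ξ, g ξ := by
  have hwindow : ∀ k < K, ∃ r R, 0 ≤ r ∧ r ≤ R ∧ R ≤ ε ∧ t * f r = k * π + π / 4 ∧
      t * f R = k * π + 3 * π / 4 ∧
      MapsTo (fun s => t * f s) (Icc r R) (Icc (k * π + π / 4) (k * π + 3 * π / 4)) := by
    intro k hk
    have : ((k : ℝ) + 1) * π ≤ K * π := by gcongr; exact_mod_cast hk
    exact exists_mapsTo_Icc_of_continuousOn hε (continuousOn_const.mul hcont)
      (by simp [hf0]; positivity) (by linarith [pi_pos]) (by linarith [pi_pos])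
  choose! r R hr hrR hR hfr hfR hmaps using hwindow
  have hdisj : (Finset.range K : Set ℕ).PairwiseDisjoint fun k => annulus (r k) (R k) :=
    fun j hj k hk hjk => ((disjoint_Icc_phase_windows hjk).preimage fun ξ => t * f ‖ξ‖).mono
      (fun _ hξ => hmaps j (Finset.mem_range.mp hj) hξ)
      (fun _ hξ => hmaps k (Finset.mem_range.mp hk) hξ)
  calc ENNReal.ofReal (c * π / (2 * Λ ^ 2) * ∑ k ∈ Finset.range K, 1 / ((k : ℝ) + 1))
      = ∑ k ∈ Finset.range K, ENNReal.ofReal (c * π / (2 * Λ ^ 2 * (k + 1))) := by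
        rw [Finset.mul_sum, ENNReal.ofReal_sum_of_nonneg fun k _ => by positivity]
        congr! 2 with k; field_simp
    _ ≤ ∑ k ∈ Finset.range K, ∫⁻ ξ in annulus (r k) (R k), g ξ := by
        refine Finset.sum_le_sum fun k hk => ?_
        have hk := Finset.mem_range.mp hk
        exact ofReal_le_setLIntegral_annulus hf0 hlip hg hc ht (hr k hk) (hrR k hk) (hR k hk)
          (hfr k hk) (hfR k hk) (hmaps k hk)
    _ = ∫⁻ ξ in ⋃ k ∈ Finset.range K, annulus (r k) (R k), g ξ :=
        (lintegral_biUnion_finset hdisj (fun k _ => measurableSet_annulus _ _) g).symm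
    _ ≤ ∫⁻ ξ, g ξ := setLIntegral_le_lintegral _ _

end Counting

lemma exists_ofReal_mul_log_le_lintegral {f : ℝ → ℝ} {ε Λ c : ℝ} (hε : 0 ≤ ε)
    (hcont : ContinuousOn f (Icc 0 ε)) (hf0 : f 0 = 0) (hfε : 0 < f ε)
    (hlip : ∀ r r', 0 ≤ r → r ≤ r' → r' ≤ ε → f r' - f r ≤ Λ * (r' - r)) (hc : 0 ≤ c)
    (g : ℝ → EuclideanSpace ℝ (Fin 2) → ENNReal)
    (hg : ∀ t > 0, ∀ ξ, ‖ξ‖ ≤ ε → 0 < f ‖ξ‖ → 1 / 2 ≤ |sin (t * f ‖ξ‖)| →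
      ENNReal.ofReal (c / f ‖ξ‖ ^ 2) ≤ g t ξ) :
    ∃ C > 0, ∃ T, ∀ t ≥ T, ENNReal.ofReal (C * c * log t) ≤ ∫⁻ ξ, g t ξ := by
  have hΛ : Λ ≠ 0 := by
    rintro rfl
    have := hlip 0 ε le_rfl hε le_rfl
    rw [hf0] at this; linarith
  have ha : 0 < f ε / π := by positivity
  refine ⟨π / (4 * Λ ^ 2), by positivity, (f ε / π)⁻¹ ^ 2, fun t ht => ?_⟩
  have ht0 : 0 < t := lt_of_lt_of_le (by positivity) ht
  have hK : (⌊f ε / π * t⌋₊ : ℝ) * π ≤ t * f ε := by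
    have := Nat.floor_le (by positivity : 0 ≤ f ε / π * t)
    calc _ ≤ f ε / π * t * π := by gcongr
      _ = t * f ε := by field_simp
  refine le_trans (ENNReal.ofReal_le_ofReal ?_)
    (ofReal_mul_sum_le_lintegral hε hcont hf0 hlip (hg t ht0) hc ht0 hK)
  calc π / (4 * Λ ^ 2) * c * log t = c * π / (4 * Λ ^ 2) * log t := by ring
    _ ≤ c * π / (4 * Λ ^ 2) * (2 * log (⌊f ε / π * t⌋₊ + 1)) := by
        gcongr; exact log_le_two_mul_log_floor_add_one ha ht
    _ = c * π / (2 * Λ ^ 2) * log (⌊f ε / π * t⌋₊ + 1) := by field_simp; ring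
    _ ≤ _ := by
        gcongr
        exact_mod_cast log_add_one_le_sum_range _

theorem stmt14_general (δ θ μ κ : ℝ) (hδ : 0 < δ) (hθ : 0 < θ)
    (hμ : 0 ≤ μ) (hκ : 0 < κ)
    (u₀ u₁ : EuclideanSpace ℝ (Fin 2) → ℝ)
    (P : ℝ) (hP : P = ∫ x, u₁ x) (hP0 : P ≠ 0)
    (f : ℝ → ℝ)
    (hf : ∀ r : ℝ, f r = Real.sqrt ((μ * r ^ 4 + κ * r ^ 2) / (1 + δ * r ^ (2 * θ))))
    (w : ℝ → EuclideanSpace ℝ (Fin 2) → ℂ)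
    (hw : ∀ (t : ℝ) (ξ : EuclideanSpace ℝ (Fin 2)), w t ξ =
        (Real.cos (t * f ‖ξ‖) : ℂ)
          * (∫ x, Complex.exp (-(Complex.I * (⟪x, ξ⟫ : ℝ))) * (u₀ x : ℂ))
      + ((Real.sin (t * f ‖ξ‖) / f ‖ξ‖ : ℝ) : ℂ)
          * (∫ x, Complex.exp (-(Complex.I * (⟪x, ξ⟫ : ℝ))) * (u₁ x : ℂ))) :
    ∃ C : ℝ, 0 < C ∧ ∃ T : ℝ, ∀ t ≥ T,
      ENNReal.ofReal (C * P ^ 2 * Real.log t)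
        ≤ ∫⁻ ξ : EuclideanSpace ℝ (Fin 2), ENNReal.ofReal (‖w t ξ‖ ^ 2) := by
  obtain rfl : f = dispersion δ θ μ κ := funext hf
  have hu₁ : Integrable u₁ := by by_contra h; exact hP0 (hP.trans (integral_undef h))
  obtain ⟨ε₁, hε₁, hû₁⟩ := exists_half_le_norm_angularFourier hu₁ (hP ▸ hP0)
  set Λ := (4 * μ + 2 * κ) / √(κ / (1 + δ))
  set M := ∫ x, |u₀ x|
  have hΛ : 0 < Λ := div_pos (by positivity) (sqrt_pos.mpr (by positivity))
  have hM : 0 ≤ M := integral_nonneg fun x => abs_nonneg _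
  set ε := min (min 1 ε₁) (|P| / (8 * Λ * (M + 1)))
  have hε : 0 < ε := lt_min (lt_min one_pos hε₁) (div_pos (abs_pos.mpr hP0) (by positivity))
  have hε1 : ε ≤ 1 := (min_le_left _ _).trans (min_le_left _ _)
  have hεP : ε * (8 * Λ * (M + 1)) ≤ |P| := (le_div_iff₀ (by positivity)).mp (min_le_right _ _)
  have hlip : ∀ r r', 0 ≤ r → r ≤ r' → r' ≤ ε →
      dispersion δ θ μ κ r' - dispersion δ θ μ κ r ≤ Λ * (r' - r) := fun r r' hr hrr' hr' =>
    dispersion_sub_le hδ.le hθ.le hμ hκ hr hrr' (hr'.trans hε1)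
  have hlow : ∀ t > 0, ∀ ξ : EuclideanSpace ℝ (Fin 2), ‖ξ‖ ≤ ε → 0 < dispersion δ θ μ κ ‖ξ‖ →
      1 / 2 ≤ |sin (t * dispersion δ θ μ κ ‖ξ‖)| →
      ENNReal.ofReal (P ^ 2 / 64 / dispersion δ θ μ κ ‖ξ‖ ^ 2) ≤ ENNReal.ofReal (‖w t ξ‖ ^ 2) := by
    intro t _ ξ hξ hpos hsin
    have hfξ := hlip 0 ‖ξ‖ le_rfl (norm_nonneg ξ) hξ
    rw [dispersion_zero, sub_zero, sub_zero] at hfξ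
    rw [hw, ← sq_abs P]
    refine ENNReal.ofReal_le_ofReal (sq_div_le_norm_cos_mul_add_sin_div_mul_sq hpos hsin
      (norm_angularFourier_le u₀ ξ) (hP ▸ hû₁ ξ (hξ.trans ((min_le_left _ _).trans
        (min_le_right _ _)))) ?_)
    nlinarith [mul_le_mul_of_nonneg_left hξ hΛ.le, hεP, hfξ]
  obtain ⟨C, hC, T, hT⟩ := exists_ofReal_mul_log_le_lintegral hε.le
    ((continuousOn_dispersion hδ.le hθ.le).mono Icc_subset_Ici_self) dispersion_zero
    (lt_of_lt_of_le (by positivity) (mul_le_dispersion hδ.le hθ.le hμ hκ.le hε.le hε1)) hlip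
    (by positivity) _ hlow
  exact ⟨C / 64, by positivity, T, fun t ht => by convert hT t ht using 2; ring⟩

theorem stmt14 (δ θ μ κ γ : ℝ) (hδ : 0 < δ) (hθ : 0 < θ) (hθ2 : θ ≤ 2)
    (hμ : 0 ≤ μ) (hκ : 0 < κ) (hγ : 0 < γ) (hγ1 : γ ≤ 1)
    (u₀ u₁ : EuclideanSpace ℝ (Fin 2) → ℝ) (hu₀ : MemLp u₀ 2 volume)
    (hu₁ : Integrable (fun x => (1 + ‖x‖ ^ γ) * |u₁ x|))
    (P : ℝ) (hP : P = ∫ x, u₁ x) (hP0 : P ≠ 0)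
    (f : ℝ → ℝ)
    (hf : ∀ r : ℝ, f r = Real.sqrt ((μ * r ^ 4 + κ * r ^ 2) / (1 + δ * r ^ (2 * θ))))
    (w : ℝ → EuclideanSpace ℝ (Fin 2) → ℂ)
    (hw : ∀ (t : ℝ) (ξ : EuclideanSpace ℝ (Fin 2)), w t ξ =
        (Real.cos (t * f ‖ξ‖) : ℂ)
          * (∫ x, Complex.exp (-(Complex.I * (⟪x, ξ⟫ : ℝ))) * (u₀ x : ℂ))
      + ((Real.sin (t * f ‖ξ‖) / f ‖ξ‖ : ℝ) : ℂ)
          * (∫ x, Complex.exp (-(Complex.I * (⟪x, ξ⟫ : ℝ))) * (u₁ x : ℂ))) :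
    ∃ C : ℝ, 0 < C ∧ ∃ T : ℝ, ∀ t ≥ T,
      ENNReal.ofReal (C * P ^ 2 * Real.log t)
        ≤ ∫⁻ ξ : EuclideanSpace ℝ (Fin 2), ENNReal.ofReal (‖w t ξ‖ ^ 2) :=
  stmt14_general δ θ μ κ hδ hθ hμ hκ u₀ u₁ P hP hP0 f hf w hw
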